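/- Setting u = √5·i, v = j − k, w = uv in ℍ(K), one has u² = −5, v² = −2 and uv = −vu, so that D = ℚ-span of {1,u,v,w} is a quaternion algebra over ℚ of type (−5,−2/ℚ), and ℍ(K) = K ⊗_ℚ D. Moreover, for α ∈ K and x ∈ D, η(αx) = α'·x̄. -/

import Mathlib

open Polynomial Quaternion

noncomputable section

set_option maxRecDepth 8000
set_option synthInstance.maxHeartbeats 1000000
set_option maxHeartbeats 1000000

def f5 : ℚ[X] := X ^ 2 - C 5

instance f5_irred : Fact (Irreducible f5) := ⟨by
  unfold f5
  apply X_pow_sub_C_irreducible_of_prime Nat.prime_two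
  intro b hb
  have h5 : Irrational (Real.sqrt 5) := (Nat.prime_five).irrational_sqrt
  have hb' : ((b : ℝ)) ^ 2 = 5 := by exact_mod_cast congrArg (fun q : ℚ => (q : ℝ)) hb
  have heq : Real.sqrt 5 = |(b : ℝ)| := by
    rw [← hb', Real.sqrt_sq_eq_abs]
  rw [heq] at h5
  exact h5 ⟨|b|, by push_cast; ring⟩⟩

abbrev K : Type := AdjoinRoot f5

instance : Field K := inferInstance
instance : SMul K (Quaternion K) := inferInstance
instance : Algebra K (Quaternion K) := inferInstance

def sqrt5 : K := AdjoinRoot.root f5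

lemma sqrt5_sq : sqrt5 ^ 2 = 5 := by
  have h : AdjoinRoot.mk f5 (X ^ 2 - C 5) = 0 := AdjoinRoot.mk_self
  rw [map_sub, map_pow, AdjoinRoot.mk_X, AdjoinRoot.mk_C, sub_eq_zero] at h
  simpa [sqrt5, map_ofNat] using h

def conjK : K →+* K :=
  AdjoinRoot.lift (algebraMap ℚ K) (-sqrt5) (by
    simp only [f5, eval₂_sub, eval₂_pow, eval₂_X, eval₂_C, sub_eq_zero]
    have h : (-sqrt5) ^ 2 = sqrt5 ^ 2 := by ring
    rw [h, sqrt5_sq]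
    simp)

def τ : K := (1 + sqrt5) / 2

abbrev ℍK := Quaternion K

def twist (x : ℍK) : ℍK := ⟨conjK x.re, conjK x.imI, conjK x.imK, conjK x.imJ⟩

def icoB : Fin 4 → ℍK :=
  ![1, ⟨0,1,0,0⟩, ⟨1/2,1/2,1/2,1/2⟩, ⟨(1-τ)/2, τ/2, 0, 1/2⟩]

def Ico : AddSubgroup ℍK :=
  AddSubgroup.closure (Set.range icoB ∪ Set.range fun i => τ • icoB i)

def lB : Fin 4 → ℍK :=
  ![1, ⟨-(1/2),1/2,1/2,1/2⟩, ⟨0,-1,0,0⟩, ⟨0,1/2,(τ-1)/2,-(τ/2)⟩]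

def LatA4 : AddSubgroup ℍK := AddSubgroup.closure (Set.range lB)

def LatATau : AddSubgroup ℍK :=
  AddSubgroup.closure (Set.range lB ∪ Set.range fun i => τ • lB i)


def u : ℍK := ⟨0, sqrt5, 0, 0⟩

def v : ℍK := ⟨0, 0, 1, -1⟩

def w : ℍK := u * v

/-!
The relations are coordinate computations. Since `{1, u, v, w}` spans `ℍ(K)` over `K` and
`dim_K ℍ(K) = 4`, it is a `K`-basis, hence `ℚ`-linearly independent; this makes the canonical map
`ℍ[ℚ, -5, -2] → ℍ(K)` injective, with image `D`. Finally `η` is `α ↦ α'`-semilinear, and it agrees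
with conjugation on `1, u, v, w` (it negates `u`, `v`, `w` because `√5' = -√5` and `η` swaps `j`
and `k`), hence on all of `D` by `ℚ`-linearity.
-/

lemma Matrix.range_vecFour {α : Type*} (a b c d : α) : Set.range ![a, b, c, d] = {a, b, c, d} := by
  simp only [Matrix.range_cons, Matrix.range_empty, Set.union_empty, Set.singleton_union]

namespace QuaternionAlgebra.Basis

variable {R A : Type*} [CommRing R] [Ring A] [Algebra R A] {c₁ c₂ c₃ : R}

lemma coe_liftHom (q : Basis A c₁ c₂ c₃) :
    ⇑q.liftHom = Fintype.linearCombination R ![1, q.i, q.j, q.k] ∘ equivTuple c₁ c₂ c₃ := by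
  ext x
  simp [lift, Fintype.linearCombination_apply, Fin.sum_univ_four, Algebra.algebraMap_eq_smul_one]

lemma range_liftHom_eq_span (q : Basis A c₁ c₂ c₃) :
    Set.range q.liftHom = Submodule.span R ({1, q.i, q.j, q.k} : Set A) := by
  rw [coe_liftHom, (equivTuple c₁ c₂ c₃).surjective.range_comp, ← LinearMap.coe_range,
    Fintype.range_linearCombination, Matrix.range_vecFour]

lemma injective_liftHom_iff (q : Basis A c₁ c₂ c₃) :
    Function.Injective q.liftHom ↔ LinearIndependent R ![1, q.i, q.j, q.k] := by
  rw [linearIndependent_iff_injective_fintypeLinearCombination, coe_liftHom,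
    EquivLike.injective_comp]

end QuaternionAlgebra.Basis

@[simp] lemma u_re : u.re = 0 := rfl
@[simp] lemma u_imI : u.imI = sqrt5 := rfl
@[simp] lemma u_imJ : u.imJ = 0 := rfl
@[simp] lemma u_imK : u.imK = 0 := rfl
@[simp] lemma v_re : v.re = 0 := rfl
@[simp] lemma v_imI : v.imI = 0 := rfl
@[simp] lemma v_imJ : v.imJ = 1 := rfl
@[simp] lemma v_imK : v.imK = -1 := rfl

@[simp] lemma w_re : w.re = 0 := by simp [w, Quaternion.re_mul]
@[simp] lemma w_imI : w.imI = 0 := by simp [w, Quaternion.imI_mul]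
@[simp] lemma w_imJ : w.imJ = sqrt5 := by simp [w, Quaternion.imJ_mul]
@[simp] lemma w_imK : w.imK = sqrt5 := by simp [w, Quaternion.imK_mul]

lemma u_mul_u : u * u = -5 := by
  rw [show (-5 : ℍK) = ((-5 : K) : ℍK) by norm_cast]
  ext <;> simp [Quaternion.re_mul, Quaternion.imI_mul, Quaternion.imJ_mul, Quaternion.imK_mul]
  linear_combination sqrt5_sq

lemma v_mul_v : v * v = -2 := by
  rw [show (-2 : ℍK) = ((-2 : K) : ℍK) by norm_cast]
  ext <;> simp [Quaternion.re_mul, Quaternion.imI_mul, Quaternion.imJ_mul, Quaternion.imK_mul]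
  norm_num

lemma u_mul_v_anticomm : u * v = -(v * u) := by
  ext <;> simp [Quaternion.re_mul, Quaternion.imI_mul, Quaternion.imJ_mul, Quaternion.imK_mul]

def basisD : QuaternionAlgebra.Basis ℍK (-5 : ℚ) 0 (-2 : ℚ) where
  i := u
  j := v
  k := w
  i_mul_i := by
    rw [u_mul_u, zero_smul, add_zero, ← Algebra.algebraMap_eq_smul_one, map_neg, map_ofNat]
  j_mul_j := by rw [v_mul_v, ← Algebra.algebraMap_eq_smul_one, map_neg, map_ofNat]
  i_mul_j := rfl
  j_mul_i := by rw [w, u_mul_v_anticomm]; simp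

lemma sqrt5_ne_zero : sqrt5 ≠ 0 := by
  intro h
  simpa [h] using sqrt5_sq

lemma span_one_u_v_w_eq_top : Submodule.span K ({1, u, v, w} : Set ℍK) = ⊤ := by
  refine Submodule.eq_top_iff'.2 fun x => ?_
  have hx : x = x.re • 1 + (x.imI / sqrt5) • u + ((x.imJ - x.imK) / 2) • v
      + ((x.imJ + x.imK) / (2 * sqrt5)) • w := by
    ext <;> simp [smul_eq_mul] <;> field_simp [sqrt5_ne_zero] <;> ring
  rw [hx]
  refine add_mem (add_mem (add_mem ?_ ?_) ?_) ?_ <;>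
    exact Submodule.smul_mem _ _ (Submodule.subset_span (by simp))

lemma linearIndependent_one_u_v_w : LinearIndependent K ![1, u, v, w] :=
  linearIndependent_of_top_le_span_of_card_eq_finrank
    (by rw [Matrix.range_vecFour, span_one_u_v_w_eq_top]) (by simp [Quaternion.finrank_eq_four])

lemma injective_basisD_liftHom : Function.Injective basisD.liftHom :=
  basisD.injective_liftHom_iff.2 (linearIndependent_one_u_v_w.restrict_scalars' ℚ)

lemma conjK_sqrt5 : conjK sqrt5 = -sqrt5 := AdjoinRoot.lift_root _

@[simp] lemma twist_re (x : ℍK) : (twist x).re = conjK x.re := rfl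
@[simp] lemma twist_imI (x : ℍK) : (twist x).imI = conjK x.imI := rfl
@[simp] lemma twist_imJ (x : ℍK) : (twist x).imJ = conjK x.imK := rfl
@[simp] lemma twist_imK (x : ℍK) : (twist x).imK = conjK x.imJ := rfl

lemma twist_add (x y : ℍK) : twist (x + y) = twist x + twist y := by
  ext <;> simp

lemma twist_smul (α : K) (x : ℍK) : twist (α • x) = conjK α • twist x := by
  ext <;> simp

lemma twist_rat_smul (q : ℚ) (x : ℍK) : twist (q • x) = q • twist x := by
  ext <;> simp [map_rat_smul]

lemma twist_eq_star_of_mem_span {x : ℍK} (hx : x ∈ Submodule.span ℚ ({1, u, v, w} : Set ℍK)) :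
    twist x = star x := by
  induction hx using Submodule.span_induction with
  | mem y hy =>
    rcases hy with rfl | rfl | rfl | rfl <;> ext <;> simp [conjK_sqrt5]
  | zero => ext <;> simp
  | add x y _ _ hx hy => rw [twist_add, hx, hy, star_add]
  | smul q x _ hx => rw [twist_rat_smul, hx, star_rat_smul]

/-- u = √5·i, v = j−k, w = uv satisfy u² = −5, v² = −2, uv = −vu, the
ℚ-span D of {1,u,v,w} is a quaternion algebra over ℚ of type (−5,−2/ℚ),
ℍ(K) = K·D (i.e. K ⊗_ℚ D), and η(αx) = α'·x̄ for α ∈ K, x ∈ D. -/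
theorem quaternion_subalgebra_D :
    u ^ 2 = -5 ∧ v ^ 2 = -2 ∧ u * v = -(v * u) ∧
    (∃ φ : ℍ[ℚ, -5, -2] →ₐ[ℚ] ℍK, Function.Injective φ ∧
      Set.range φ = (Submodule.span ℚ ({1, u, v, w} : Set ℍK) : Set ℍK)) ∧
    Submodule.span K ({1, u, v, w} : Set ℍK) = ⊤ ∧
    (∀ α : K, ∀ x ∈ Submodule.span ℚ ({1, u, v, w} : Set ℍK),
      twist (α • x) = conjK α • star x) := by
  refine ⟨by rw [sq, u_mul_u], by rw [sq, v_mul_v], u_mul_v_anticomm,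
    ⟨basisD.liftHom, injective_basisD_liftHom, basisD.range_liftHom_eq_span⟩, span_one_u_v_w_eq_top,
    fun α x hx => ?_⟩
  rw [twist_smul, twist_eq_star_of_mem_span hx]
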